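/- arXiv:2007.10143 — 3 statements merged into one kernel-verified Lean document; each statement's English description precedes it below -/
import Mathlib

section
/- Fix a class a ∈ Fin n with n ≥ 2. Suppose the contextualizations c i (i ∈ Fin n) are pairwise orthogonal (⟪c i, c j⟫ = 0 whenever i ≠ j) and c a ≠ 0. Then the gradient of the 1-shot support cross-entropy loss g with respect to the head weight of class a, evaluated at ψ a, satisfies ⟪c a, − gradient g (ψ a)⟫ > 0; that is, the inner-loop update direction for the head weights of class a is positively correlated with the contextualization of its support example. -/
/-!
Differentiating log-sum-exp gives the softmax, so the gradient of the loss in the head weight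
of class `a` is `∑ j, p j • c j - c a`, where `p j < 1` is the softmax probability of class `a`
on the support example `c j`. Against `c a` the orthogonality of the `c j` kills every term but
`j = a`, leaving `⟪c a, -∇g⟫ = (1 - p a) * ‖c a‖ ^ 2 > 0`.
-/

open Real RealInnerProductSpace

noncomputable def softmax {ι : Type*} [Fintype ι] (z : ι → ℝ) (i : ι) : ℝ :=
  exp (z i) / ∑ j, exp (z j)

theorem softmax_lt_one {ι : Type*} [Fintype ι] [Nontrivial ι] (z : ι → ℝ) (i : ι) :
    softmax z i < 1 := by
  obtain ⟨j, hji⟩ := exists_ne i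
  rw [softmax, div_lt_one (Finset.sum_pos (fun k _ => exp_pos (z k)) ⟨i, Finset.mem_univ i⟩)]
  exact Finset.single_lt_sum hji (Finset.mem_univ i) (Finset.mem_univ j) (exp_pos _)
    (fun k _ _ => (exp_pos _).le)

theorem HasFDerivAt.log_sum_exp {E ι : Type*} [NormedAddCommGroup E] [NormedSpace ℝ E]
    [Fintype ι] [Nonempty ι] {f : ι → E → ℝ} {f' : ι → E →L[ℝ] ℝ} {x : E}
    (hf : ∀ i, HasFDerivAt (f i) (f' i) x) :
    HasFDerivAt (fun w => Real.log (∑ i, Real.exp (f i w)))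
      (∑ i, softmax (fun i => f i x) i • f' i) x := by
  have hZ : ∑ i, Real.exp (f i x) ≠ 0 :=
    (Finset.sum_pos (fun i _ => Real.exp_pos _) Finset.univ_nonempty).ne'
  convert (HasFDerivAt.fun_sum fun i _ => (hf i).exp).log hZ using 1
  simp only [softmax, Finset.smul_sum, smul_smul, div_eq_inv_mul]

section CrossEntropy

variable {E ι : Type*} [NormedAddCommGroup E] [InnerProductSpace ℝ E]

theorem inner_sum_smul_of_pairwise_orthogonal [Fintype ι] {c : ι → E}
    (hc : Pairwise fun i j => ⟪c i, c j⟫ = 0) (p : ι → ℝ) (a : ι) :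
    ⟪c a, ∑ j, p j • c j⟫ = p a * ‖c a‖ ^ 2 := by
  rw [inner_sum, Finset.sum_eq_single a
    (fun j _ hja => by rw [real_inner_smul_right, hc hja.symm, mul_zero])
    (fun ha => absurd (Finset.mem_univ a) ha), real_inner_smul_right, real_inner_self_eq_norm_sq]

theorem hasFDerivAt_inner_update_add [DecidableEq ι] (ψ : ι → E) (a i : ι) (v : E) (β : ℝ)
    (x : E) :
    HasFDerivAt (fun w => ⟪Function.update ψ a w i, v⟫ + β)
      (if i = a then innerSL ℝ v else 0) x := by
  by_cases h : i = a
  · subst h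
    simpa only [Function.update_self, if_pos, innerSL_apply_apply, real_inner_comm v]
      using (innerSL ℝ v).hasFDerivAt.add_const β
  · simp only [Function.update_of_ne h, if_neg h]
    exact hasFDerivAt_const _ x

/-- The cross-entropy loss of the linear head `(ψ, b)` on a support set with the single example
`c j` in class `j`. -/
noncomputable def crossEntropyLoss [Fintype ι] (ψ c : ι → E) (b : ι → ℝ) : ℝ :=
  ∑ j, (-(⟪ψ j, c j⟫ + b j) + log (∑ i, exp (⟪ψ i, c j⟫ + b i)))

theorem hasGradientAt_crossEntropyLoss_update [CompleteSpace E] [Fintype ι] [Nonempty ι]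
    [DecidableEq ι] (ψ c : ι → E) (b : ι → ℝ) (a : ι) (x : E) :
    HasGradientAt (fun w => crossEntropyLoss (Function.update ψ a w) c b)
      (∑ j, softmax (fun i => ⟪Function.update ψ a x i, c j⟫ + b i) a • c j - c a) x := by
  rw [hasGradientAt_iff_hasFDerivAt]
  have hterm j := (hasFDerivAt_inner_update_add ψ a j (c j) (b j) x).fun_neg.fun_add
    (HasFDerivAt.log_sum_exp fun i => hasFDerivAt_inner_update_add ψ a i (c j) (b i) x)
  refine (HasFDerivAt.fun_sum (u := Finset.univ) fun j _ => hterm j).congr_fderiv ?_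
  ext u
  simp only [apply_ite, neg_zero, smul_zero, Finset.sum_ite_eq', Finset.mem_univ, if_true,
    Finset.sum_add_distrib, add_apply, neg_apply, sum_apply, smul_apply, sub_apply, smul_eq_mul,
    innerSL_apply_apply, real_inner_comm u, map_sub, map_sum, map_smul,
    InnerProductSpace.toDual_apply_apply]
  ring

end CrossEntropy

/-- Fix a class `a ∈ Fin n` with `n ≥ 2`. Suppose the contextualizations
`c i` are pairwise orthogonal and `c a ≠ 0`. Then the gradient of the 1-shot support
cross-entropy loss `g` with respect to the head weight of class `a`, evaluated at `ψ a`,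
satisfies `⟪c a, -gradient g (ψ a)⟫ > 0`: the inner-loop update direction for the head
weights of class `a` is positively correlated with the contextualization of its support
example. -/
theorem head_update_positively_correlated
    (n d : ℕ) (hn : 2 ≤ n) (a : Fin n)
    (c ψ : Fin n → EuclideanSpace ℝ (Fin d)) (b : Fin n → ℝ)
    (hortho : ∀ i j : Fin n, i ≠ j → ⟪c i, c j⟫ = 0)
    (hca : c a ≠ 0)
    (g : EuclideanSpace ℝ (Fin d) → ℝ)
    (hg : g = fun w =>
      ∑ a'' : Fin n,
        (-(⟪Function.update ψ a w a'', c a''⟫ + b a'') +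
          Real.log (∑ a' : Fin n,
            Real.exp (⟪Function.update ψ a w a', c a''⟫ + b a')))) :
    0 < ⟪c a, -gradient g (ψ a)⟫ := by
  have : Nontrivial (Fin n) := Fin.nontrivial_iff_two_le.mpr hn
  have : Nonempty (Fin n) := ⟨a⟩
  set p := fun j => softmax (fun i => ⟪Function.update ψ a (ψ a) i, c j⟫ + b i) a
  have hgrad : gradient g (ψ a) = ∑ j, p j • c j - c a :=
    hg ▸ (hasGradientAt_crossEntropyLoss_update ψ c b a (ψ a)).gradient
  calc 0 < (1 - p a) * ‖c a‖ ^ 2 :=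
        mul_pos (sub_pos.2 (softmax_lt_one _ a)) (pow_pos (norm_pos_iff.2 hca) 2)
    _ = ⟪c a, -gradient g (ψ a)⟫ := by
      rw [hgrad, neg_sub, inner_sub_right, inner_sum_smul_of_pairwise_orthogonal hortho,
        real_inner_self_eq_norm_sq]
      ring
end

section
/- Fix a class a ∈ Fin n. For every w ∈ EuclideanSpace ℝ (Fin d), the function g has gradient −c a + D(w) at w (i.e., HasGradientAt g (−c a + D w) w), where D(w) = Σ_{a'' ∈ Fin n} s_{a''}(w) • c a'' and s_{a''}(w) = Real.exp (⟪w, c a''⟫ + b a) / Σ_{ã ∈ Fin n} Real.exp (⟪Ψ_w ã, c a''⟫ + b ã). In other words, the gradient of the support loss with respect to the head weight of class a equals −C^{(a)} + D^{(a)}. -/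
/-!
Only the `a`-th logit depends on `w`, and it does so linearly. Hence every summand of the loss is
an affine function of `w` plus the logarithm of `exp (⟪w, c a''⟫ + b a) + const`, and the chain rule
turns the gradient of that logarithm into the softmax weight `s a'' w` times `c a''`.
-/

open RealInnerProductSpace

namespace HasGradientAt

variable {F ι : Type*} [NormedAddCommGroup F] [InnerProductSpace ℝ F] [CompleteSpace F]
  {f g : F → ℝ} {f' g' x : F}

theorem add (hf : HasGradientAt f f' x) (hg : HasGradientAt g g' x) :
    HasGradientAt (fun y => f y + g y) (f' + g') x := by
  rw [hasGradientAt_iff_hasFDerivAt] at *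
  simpa only [map_add] using hf.fun_add hg

theorem neg (hf : HasGradientAt f f' x) : HasGradientAt (fun y => -f y) (-f') x := by
  rw [hasGradientAt_iff_hasFDerivAt] at *
  simpa only [map_neg] using hf.fun_neg

theorem add_const (hf : HasGradientAt f f' x) (β : ℝ) :
    HasGradientAt (fun y => f y + β) f' x :=
  hasGradientAt_iff_hasFDerivAt.2 ((hasGradientAt_iff_hasFDerivAt.1 hf).add_const β)

theorem sum {u : Finset ι} {A : ι → F → ℝ} {A' : ι → F}
    (h : ∀ i ∈ u, HasGradientAt (A i) (A' i) x) :
    HasGradientAt (fun y => ∑ i ∈ u, A i y) (∑ i ∈ u, A' i) x := by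
  simp only [hasGradientAt_iff_hasFDerivAt, map_sum] at *
  exact HasFDerivAt.fun_sum h

theorem _root_.HasDerivAt.comp_hasGradientAt {h : ℝ → ℝ} {h' : ℝ}
    (hh : HasDerivAt h h' (f x)) (hf : HasGradientAt f f' x) :
    HasGradientAt (h ∘ f) (h' • f') x := by
  rw [hasGradientAt_iff_hasFDerivAt] at *
  simpa using hh.comp_hasFDerivAt x hf

theorem exp (hf : HasGradientAt f f' x) :
    HasGradientAt (fun y => Real.exp (f y)) (Real.exp (f x) • f') x :=
  (Real.hasDerivAt_exp (f x)).comp_hasGradientAt hf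

theorem log (hf : HasGradientAt f f' x) (hx : f x ≠ 0) :
    HasGradientAt (fun y => Real.log (f y)) ((f x)⁻¹ • f') x :=
  (Real.hasDerivAt_log hx).comp_hasGradientAt hf

end HasGradientAt

section UpdateInner

variable {F ι : Type*} [NormedAddCommGroup F] [InnerProductSpace ℝ F] [CompleteSpace F]
  [DecidableEq ι]

theorem hasGradientAt_inner_left (x w : F) : HasGradientAt (fun y => ⟪y, x⟫) x w := by
  rw [hasGradientAt_iff_hasFDerivAt]
  refine (InnerProductSpace.toDual ℝ F x).hasFDerivAt.congr_of_eventuallyEq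
    (.of_forall fun y => ?_)
  simp [real_inner_comm]

theorem hasGradientAt_inner_update (ψ : ι → F) (i j : ι) (x w : F) :
    HasGradientAt (fun y => ⟪Function.update ψ i y j, x⟫) (if j = i then x else 0) w := by
  by_cases hj : j = i
  · subst hj
    simpa using hasGradientAt_inner_left x w
  · simpa [hj] using hasGradientAt_const w ⟪ψ j, x⟫

theorem hasGradientAt_sum_exp_inner_update [Fintype ι] (ψ : ι → F) (i : ι) (x : F) (β : ι → ℝ)
    (w : F) :
    HasGradientAt (fun y => ∑ j, Real.exp (⟪Function.update ψ i y j, x⟫ + β j))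
      (Real.exp (⟪w, x⟫ + β i) • x) w := by
  convert HasGradientAt.sum fun j _ => ((hasGradientAt_inner_update ψ i j x w).add_const (β j)).exp
  simp [smul_ite]

theorem hasGradientAt_crossEntropy_update [Fintype ι] (ψ : ι → F) (i j : ι) (x : F)
    (β : ι → ℝ) (w : F) :
    HasGradientAt
      (fun y => -(⟪Function.update ψ i y j, x⟫ + β j) +
        Real.log (∑ k, Real.exp (⟪Function.update ψ i y k, x⟫ + β k)))
      (-(if j = i then x else 0) +
        (Real.exp (⟪w, x⟫ + β i) / ∑ k, Real.exp (⟪Function.update ψ i w k, x⟫ + β k)) • x)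
      w := by
  have hZ : ∑ k, Real.exp (⟪Function.update ψ i w k, x⟫ + β k) ≠ 0 :=
    (Finset.sum_pos (fun _ _ => Real.exp_pos _) ⟨i, Finset.mem_univ i⟩).ne'
  rw [div_eq_inv_mul, ← smul_smul]
  exact ((hasGradientAt_inner_update ψ i j x w).add_const (β j)).neg.add
    ((hasGradientAt_sum_exp_inner_update ψ i x β w).log hZ)

end UpdateInner

/-- Fix a class `a ∈ Fin n`. For every `w`, the 1-shot support
cross-entropy loss `g` (as a function of the `a`-th head weight) has gradient
`-c a + D w` at `w`, where `D w = ∑ a'', s a'' w • c a''` with softmax weights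
`s a'' w = exp (⟪w, c a''⟫ + b a) / ∑ a', exp (⟪Ψ_w a', c a''⟫ + b a')` and
`Ψ_w = Function.update ψ a w`. -/
theorem hasGradientAt_support_loss
    (n d : ℕ) (a : Fin n)
    (c ψ : Fin n → EuclideanSpace ℝ (Fin d)) (b : Fin n → ℝ)
    (g : EuclideanSpace ℝ (Fin d) → ℝ)
    (hg : g = fun w =>
      ∑ a'' : Fin n,
        (-(⟪Function.update ψ a w a'', c a''⟫ + b a'') +
          Real.log (∑ a' : Fin n,
            Real.exp (⟪Function.update ψ a w a', c a''⟫ + b a'))))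
    (s : Fin n → EuclideanSpace ℝ (Fin d) → ℝ)
    (hs : s = fun a'' w =>
      Real.exp (⟪w, c a''⟫ + b a) /
        ∑ a' : Fin n, Real.exp (⟪Function.update ψ a w a', c a''⟫ + b a'))
    (D : EuclideanSpace ℝ (Fin d) → EuclideanSpace ℝ (Fin d))
    (hD : D = fun w => ∑ a'' : Fin n, s a'' w • c a'') :
    ∀ w : EuclideanSpace ℝ (Fin d), HasGradientAt g (-c a + D w) w := by
  intro w
  subst hg hs hD
  convert HasGradientAt.sum fun a'' _ => hasGradientAt_crossEntropy_update ψ a a'' (c a'') b w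
    using 1
  rw [Finset.sum_add_distrib, Finset.sum_neg_distrib, Finset.sum_ite_eq' Finset.univ a c,
    if_pos (Finset.mem_univ a)]
end

section
/- Suppose the contextualizations c i (i ∈ Fin n) are pairwise orthogonal (⟪c i, c j⟫ = 0 whenever i ≠ j). Then for each class a ∈ Fin n, ⟪c a, c a − D⟫ = (1 − s a) · ‖c a‖², where s and D are the softmax coefficients and softmax-weighted average defined from ψ, b, c. Consequently, if moreover n ≥ 2 and c a ≠ 0, then ⟪c a, c a − D⟫ > 0. -/
/-!
Orthogonality kills every term of `⟪c a, D⟫` except `s a * ‖c a‖ ^ 2`, and `s a < 1` as soon as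
the softmax denominator contains a second (positive) exponential besides the numerator.
-/

open RealInnerProductSpace

section Orthogonal

variable {ι E : Type*} [Fintype ι] [NormedAddCommGroup E] [InnerProductSpace ℝ E]

theorem real_inner_sum_smul_of_orthogonal (v : ι → E) (w : ι → ℝ) {i : ι}
    (hv : ∀ j, j ≠ i → ⟪v j, v i⟫ = 0) :
    ⟪v i, ∑ j, w j • v j⟫ = w i * ‖v i‖ ^ 2 := by
  rw [inner_sum, Finset.sum_eq_single i]
  · rw [real_inner_smul_right, real_inner_self_eq_norm_sq]
  · intro j _ hji
    rw [real_inner_smul_right, real_inner_comm, hv j hji, mul_zero]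
  · simp

theorem real_inner_sub_sum_smul_of_orthogonal (v : ι → E) (w : ι → ℝ) {i : ι}
    (hv : ∀ j, j ≠ i → ⟪v j, v i⟫ = 0) :
    ⟪v i, v i - ∑ j, w j • v j⟫ = (1 - w i) * ‖v i‖ ^ 2 := by
  rw [inner_sub_right, real_inner_sum_smul_of_orthogonal v w hv, real_inner_self_eq_norm_sq]
  ring

end Orthogonal

theorem div_sum_lt_one_of_nonneg {ι : Type*} [Fintype ι] {f : ι → ℝ} (hf : ∀ k, 0 ≤ f k)
    {i j : ι} (hji : j ≠ i) (hj : 0 < f j) : f i / ∑ k, f k < 1 := by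
  have hlt : f i < ∑ k, f k :=
    Finset.single_lt_sum hji (Finset.mem_univ i) (Finset.mem_univ j) hj fun k _ _ => hf k
  exact (div_lt_one ((hf i).trans_lt hlt)).mpr hlt

/-- If the contextualizations `c i` are pairwise orthogonal, then for
each class `a`, `⟪c a, c a - D⟫ = (1 - s a) * ‖c a‖²`, where `s` are the softmax
coefficients and `D` the softmax-weighted average defined from `ψ, b, c`. Consequently,
if moreover `n ≥ 2` and `c a ≠ 0`, then `⟪c a, c a - D⟫ > 0`. -/
theorem orthogonal_contextualizations_inner_sub_softmax
    (n d : ℕ)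
    (c ψ : Fin n → EuclideanSpace ℝ (Fin d)) (b : Fin n → ℝ)
    (hortho : ∀ i j : Fin n, i ≠ j → ⟪c i, c j⟫ = 0)
    (a : Fin n)
    (s : Fin n → ℝ)
    (hs : s = fun a'' =>
      Real.exp (⟪ψ a, c a''⟫ + b a) /
        ∑ a' : Fin n, Real.exp (⟪ψ a', c a''⟫ + b a'))
    (D : EuclideanSpace ℝ (Fin d))
    (hD : D = ∑ a'' : Fin n, s a'' • c a'') :
    ⟪c a, c a - D⟫ = (1 - s a) * ‖c a‖ ^ 2 ∧
      (2 ≤ n → c a ≠ 0 → 0 < ⟪c a, c a - D⟫) := by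
  have hinner : ⟪c a, c a - D⟫ = (1 - s a) * ‖c a‖ ^ 2 := by
    rw [hD]
    exact real_inner_sub_sum_smul_of_orthogonal c s fun j hja => hortho j a hja
  refine ⟨hinner, fun hn hca => ?_⟩
  obtain ⟨j, hja⟩ : ∃ j : Fin n, j ≠ a :=
    Fintype.exists_ne_of_one_lt_card (by rw [Fintype.card_fin]; omega) a
  have hsa : s a < 1 := by
    rw [hs]
    exact div_sum_lt_one_of_nonneg (f := fun k => Real.exp (⟪ψ k, c a⟫ + b k))
      (fun k => (Real.exp_pos _).le) hja (Real.exp_pos _)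
  rw [hinner]
  exact mul_pos (sub_pos.mpr hsa) (pow_pos (norm_pos_iff.mpr hca) 2)
end
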